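/- Let B be a finite Blaschke product of degree n and p a polynomial of degree n all of whose critical values lie in the open unit disk D. If φ : D → ℂ is holomorphic with B = p ∘ φ on D, then φ(D) = D_p, where D_p = {z ∈ ℂ : |p(z)| < 1}. -/

import Mathlib

/-!
On the disk `|B| < 1`, while `B` is continuous on the closed disk with `|B| = 1` on the circle.
Hence `p ∘ φ = B` gives `φ(D) ⊆ D_p`, and compactness of the closed disk shows that `φ(D)` is
closed in `D_p`; `φ` is not constant because `B` is not, so `φ(D)` is open. It remains to see
that `D_p` is connected.

Two points of `D_p` lie in one component of `{|p| < t}` for all large `t` (join them by a path).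
Lowering `t`, they stay in one component unless the level set `{|p| = t}` meets a critical point:
near a point where `p' ≠ 0`, `p` is a local homeomorphism, so `{|p| < t}` is locally a connected
piece of a disc, dense in `{|p| ≤ t}`. As all critical values lie in `D`, no level `t ≥ 1` is
critical.
-/

open Complex Polynomial

/-- The open unit disk in the complex plane. -/
def unitDisk : Set ℂ := {z : ℂ | ‖z‖ < 1}

open Metric Set Filter Topology ComplexConjugate

theorem unitDisk_eq_ball : unitDisk = ball 0 1 := by
  ext z
  simp [unitDisk]

section GeneralTopology

variable {X : Type*} [TopologicalSpace X]

theorem mem_connectedComponentIn_of_mem_closure [LocallyConnectedSpace X] {F : Set X}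
    (hF : IsOpen F) {x z : X} (hz : z ∈ F) (hcl : z ∈ closure (connectedComponentIn F x)) :
    z ∈ connectedComponentIn F x := by
  obtain ⟨w, hwz, hwx⟩ := mem_closure_iff.1 hcl _ hF.connectedComponentIn
    (mem_connectedComponentIn hz)
  rw [connectedComponentIn_eq hwx, ← connectedComponentIn_eq hwz]
  exact mem_connectedComponentIn hz

theorem IsPreconnected.subset_of_forall_exists_isOpen {S F : Set X} (hS : IsPreconnected S)
    (hF : IsClosed F) {x : X} (hxS : x ∈ S) (hxF : x ∈ F)
    (hloc : ∀ z ∈ S ∩ F, ∃ U, IsOpen U ∧ z ∈ U ∧ S ∩ U ⊆ F) : S ⊆ F := by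
  choose! U hUo hzU hUF using hloc
  set u := ⋃ z ∈ S ∩ F, U z
  have hSu : S ∩ u ⊆ F := by
    rintro w ⟨hwS, hwu⟩
    obtain ⟨z, hz, hwz⟩ := mem_iUnion₂.1 hwu
    exact hUF z hz ⟨hwS, hwz⟩
  rcases isPreconnected_iff_subset_of_disjoint.1 hS u Fᶜ (isOpen_biUnion hUo) hF.isOpen_compl
    (fun w hw => (em (w ∈ F)).imp (fun hwF => mem_iUnion₂.2 ⟨w, ⟨hw, hwF⟩, hzU w ⟨hw, hwF⟩⟩) id)
    (eq_empty_iff_forall_notMem.2 fun w ⟨hwS, hwu, hwF⟩ => hwF (hSu ⟨hwS, hwu⟩)) with h | h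
  · exact fun w hw => hSu ⟨hw, h hw⟩
  · exact absurd hxF (h hxS)

theorem isPreconnected_iInter_of_directed [T2Space X] {ι : Type*} [Nonempty ι] {t : ι → Set X}
    (hd : Directed (· ⊇ ·) t) (hc : ∀ i, IsCompact (t i)) (hp : ∀ i, IsPreconnected (t i)) :
    IsPreconnected (⋂ i, t i) := by
  set S := ⋂ i, t i
  have hS : IsCompact S :=
    (hc (Classical.arbitrary ι)).of_isClosed_subset (isClosed_iInter fun i => (hc i).isClosed)
      (iInter_subset _ _)
  intro u v hu hv hSuv ⟨x, hxS, hxu⟩ ⟨y, hyS, hyv⟩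
  by_contra huv
  have hnot : ∀ w ∈ S, w ∈ u → w ∉ v := fun w hw hwu hwv => huv ⟨w, hw, hwu, hwv⟩
  have hdisj : Disjoint (S \ v) (S \ u) := by
    rw [Set.disjoint_iff]
    rintro w ⟨⟨hwS, hwv⟩, -, hwu⟩
    exact (hSuv hwS).elim hwu hwv
  obtain ⟨u', v', hu', hv', hvu', huv', hdisj'⟩ :=
    SeparatedNhds.of_isCompact_isCompact (hS.diff hv) (hS.diff hu) hdisj
  have hcover : ∀ w ∈ S, w ∈ u' ∪ v' := fun w hw => by
    by_cases hwu : w ∈ u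
    · exact Or.inl (hvu' ⟨hw, hnot w hw hwu⟩)
    · exact Or.inr (huv' ⟨hw, hwu⟩)
  obtain ⟨i, hi⟩ := exists_subset_nhds_of_isCompact hd hc fun w hw =>
    (hu'.union hv').mem_nhds (hcover w hw)
  have hiu' := (hp i).subset_left_of_subset_union hu' hv' hdisj' hi
    ⟨x, iInter_subset t i hxS, hvu' ⟨hxS, hnot x hxS hxu⟩⟩
  exact hdisj'.ne_of_mem (hiu' (iInter_subset t i hyS))
    (huv' ⟨hyS, fun hyu => hnot y hyS hyu hyv⟩) rfl

theorem isCompact_setOf_le_of_tendsto_cocompact {g : X → ℝ} (hg : Continuous g)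
    (h : Tendsto g (cocompact X) atTop) (t : ℝ) : IsCompact {w | g w ≤ t} := by
  obtain ⟨K, hK, hKt⟩ := mem_cocompact.1 (h.eventually_gt_atTop t)
  exact hK.of_isClosed_subset (isClosed_le hg continuous_const) fun w hw =>
    not_not.1 fun hwK => (hKt hwK : t < g w).not_ge (show g w ≤ t from hw)

theorem mem_image_of_mem_closure_of_isCompact {Y Z : Type*} [TopologicalSpace Y] [T2Space Y]
    [TopologicalSpace Z] [T2Space Z]
    {K D : Set X} {f : X → Z} {φ : X → Y} {g : Y → Z} {W : Set Z}
    (hK : IsCompact K) (hDK : D ⊆ K) (hf : ContinuousOn f K) (hφ : ContinuousOn φ D)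
    (hg : Continuous g) (hcomp : EqOn f (g ∘ φ) D) (hKD : ∀ z ∈ K \ D, f z ∉ W)
    {ζ : Y} (hζ : ζ ∈ closure (φ '' D)) (hζW : g ζ ∈ W) : ζ ∈ φ '' D := by
  set F := 𝓟 D ⊓ comap φ (𝓝 ζ)
  have : F.NeBot := neBot_inf_comap_iff_map.2 <| by
    rw [map_principal, inf_comm]
    exact mem_closure_iff_clusterPt.1 hζ
  obtain ⟨z, hzK, hz⟩ := hK (f := F) (inf_le_left.trans (principal_mono.2 hDK))
  have := hz.neBot
  have hD : D ∈ 𝓝 z ⊓ F := mem_inf_of_right (mem_inf_of_left (mem_principal_self D))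
  have hφζ : Tendsto φ (𝓝 z ⊓ F) (𝓝 ζ) := tendsto_comap.mono_left (inf_le_right.trans inf_le_right)
  have hfz : f z = g ζ := by
    refine tendsto_nhds_unique ((hf z hzK).tendsto.mono_left (le_inf inf_le_left ?_))
      ((hg.tendsto ζ).comp hφζ |>.congr' (hcomp.eventuallyEq_of_mem hD).symm)
    exact le_principal_iff.2 (mem_of_superset hD hDK)
  have hzD : z ∈ D := not_not.1 fun h => hKD z ⟨hzK, h⟩ (hfz ▸ hζW)
  exact ⟨z, hzD, tendsto_nhds_unique
    ((hφ z hzD).tendsto.mono_left (le_inf inf_le_left (le_principal_iff.2 hD))) hφζ⟩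

end GeneralTopology

section Sublevel

variable {X : Type*} [TopologicalSpace X]

/-- `g` has no local minimum or saddle at `z`: near `z` the strict sublevel set of the level
`g z` is connected and dense in the non-strict one. -/
def IsSublevelRegularAt (g : X → ℝ) (z : X) : Prop :=
  ∃ U, IsOpen U ∧ z ∈ U ∧ IsPreconnected (U ∩ {w | g w < g z}) ∧
    U ∩ {w | g w ≤ g z} ⊆ closure (U ∩ {w | g w < g z})

theorem IsSublevelRegularAt.exists_subset_closure_connectedComponentIn {g : X → ℝ} {x z : X}
    (hz : IsSublevelRegularAt g z) (hcl : z ∈ closure (connectedComponentIn {w | g w < g z} x)) :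
    ∃ U, IsOpen U ∧ z ∈ U ∧
      U ∩ {w | g w ≤ g z} ⊆ closure (connectedComponentIn {w | g w < g z} x) := by
  obtain ⟨U, hU, hzU, hpre, hdense⟩ := hz
  obtain ⟨a, haU, hax⟩ := mem_closure_iff.1 hcl U hU hzU
  have hV : U ∩ {w | g w < g z} ⊆ connectedComponentIn {w | g w < g z} x := by
    rw [connectedComponentIn_eq hax]
    exact hpre.subset_connectedComponentIn ⟨haU, connectedComponentIn_subset _ _ hax⟩
      inter_subset_right
  exact ⟨U, hU, hzU, hdense.trans (closure_mono hV)⟩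

theorem subset_closure_connectedComponentIn_of_isPreconnected [LocallyConnectedSpace X]
    {g : X → ℝ} (hg : Continuous g) {S : Set X} (hS : IsPreconnected S) {T : ℝ}
    (hST : ∀ z ∈ S, g z ≤ T) (hreg : ∀ z ∈ S, g z = T → IsSublevelRegularAt g z)
    {x : X} (hxS : x ∈ S) (hx : g x < T) :
    S ⊆ closure (connectedComponentIn {w | g w < T} x) := by
  have hΩ : IsOpen {w | g w < T} := isOpen_lt hg continuous_const
  refine hS.subset_of_forall_exists_isOpen isClosed_closure hxS
    (subset_closure (mem_connectedComponentIn hx)) ?_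
  rintro z ⟨hzS, hzA⟩
  rcases (hST z hzS).lt_or_eq with hlt | rfl
  · exact ⟨_, hΩ.connectedComponentIn, mem_connectedComponentIn_of_mem_closure hΩ hlt hzA,
      fun w hw => subset_closure hw.2⟩
  · obtain ⟨U, hU, hzU, hUA⟩ := (hreg z hzS rfl).exists_subset_closure_connectedComponentIn hzA
    exact ⟨U, hU, hzU, fun w hw => hUA ⟨hw.2, hST w hw.1⟩⟩

theorem connectedComponentIn_setOf_lt_mono (g : X → ℝ) (x : X) {s t : ℝ} (hst : s ≤ t) :
    connectedComponentIn {w | g w < s} x ⊆ connectedComponentIn {w | g w < t} x :=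
  connectedComponentIn_mono x fun _ hw => lt_of_lt_of_le hw hst

theorem mem_connectedComponentIn_sublevel_of_forall_gt [T2Space X] [LocallyConnectedSpace X]
    {g : X → ℝ} (hg : Continuous g) (hcpt : ∀ t, IsCompact {w | g w ≤ t}) {T : ℝ}
    (hreg : ∀ z, g z = T → IsSublevelRegularAt g z) {x y : X} (hx : g x < T) (hy : g y < T)
    (hxy : ∀ t > T, y ∈ connectedComponentIn {w | g w < t} x) :
    y ∈ connectedComponentIn {w | g w < T} x := by
  -- The closures of the components of `x` in `{g < t}`, `t > T`, form a directed family of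
  -- compact connected sets; their intersection joins `x` to `y` inside `{g ≤ T}`.
  set K : Ioi T → Set X := fun t => closure (connectedComponentIn {w | g w < t} x)
  have hK_le : ∀ t, K t ⊆ {w | g w ≤ t} := fun t =>
    closure_minimal
      (fun w hw => show g w ≤ t from (connectedComponentIn_subset {w | g w < t} x hw).le)
      (isClosed_le hg continuous_const)
  have : Nonempty (Ioi T) := ⟨⟨T + 1, lt_add_one T⟩⟩
  have hS : IsPreconnected (⋂ t, K t) := by
    refine isPreconnected_iInter_of_directed (fun s t => ?_)
      (fun t => (hcpt t).of_isClosed_subset isClosed_closure (hK_le t))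
      (fun t => isPreconnected_connectedComponentIn.closure)
    exact ⟨⟨min s t, mem_Ioi.2 (lt_min s.2 t.2)⟩,
      closure_mono (connectedComponentIn_setOf_lt_mono g x (min_le_left _ _)),
      closure_mono (connectedComponentIn_setOf_lt_mono g x (min_le_right _ _))⟩
  have hST : ∀ z ∈ ⋂ t, K t, g z ≤ T := fun z hz =>
    le_of_forall_gt_imp_ge_of_dense fun t ht => hK_le ⟨t, ht⟩ (mem_iInter.1 hz ⟨t, ht⟩)
  have hxS : x ∈ ⋂ t, K t := mem_iInter.2 fun t =>
    subset_closure (mem_connectedComponentIn (hx.trans t.2))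
  have hyS : y ∈ ⋂ t, K t := mem_iInter.2 fun t => subset_closure (hxy t t.2)
  exact mem_connectedComponentIn_of_mem_closure (isOpen_lt hg continuous_const) hy
    (subset_closure_connectedComponentIn_of_isPreconnected hg hS hST
      (fun z _ => hreg z) hxS hx hyS)

theorem Path.exists_forall_gt_mem_connectedComponentIn {g : X → ℝ} (hg : Continuous g)
    {x y : X} (γ : Path x y) :
    ∃ i, ∀ t, g (γ i) < t → y ∈ connectedComponentIn {w | g w < t} x := by
  obtain ⟨i, -, hi⟩ := isCompact_univ.exists_isMaxOn univ_nonempty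
    (hg.comp γ.continuous).continuousOn
  refine ⟨i, fun t ht => ?_⟩
  refine (isConnected_range γ.continuous).isPreconnected.subset_connectedComponentIn
    ⟨0, γ.source⟩ ?_ ⟨1, γ.target⟩
  rintro _ ⟨j, rfl⟩
  exact lt_of_le_of_lt (hi (mem_univ j)) ht

theorem isPreconnected_sublevel_of_isSublevelRegularAt [T2Space X] [LocallyPathConnectedSpace X]
    [PathConnectedSpace X] {g : X → ℝ} (hg : Continuous g) (hcpt : ∀ t, IsCompact {w | g w ≤ t})
    {c : ℝ} (hreg : ∀ z, c ≤ g z → IsSublevelRegularAt g z) :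
    IsPreconnected {w | g w < c} := by
  refine isPreconnected_of_forall_pair fun x hx y hy => ⟨connectedComponentIn {w | g w < c} x,
    connectedComponentIn_subset _ _, mem_connectedComponentIn hx, ?_,
    isPreconnected_connectedComponentIn⟩
  -- The levels `G` at which `x` and `y` are joined form an up-set, open by `hopen`; if its
  -- infimum were `≥ c`, it would belong to `G` by the regular-level lemma.
  set G := {t | y ∈ connectedComponentIn {w | g w < t} x}
  have hmono : ∀ {s t}, s ≤ t → s ∈ G → t ∈ G := fun hst hs =>
    connectedComponentIn_setOf_lt_mono g x hst hs
  have hopen : ∀ t ∈ G, ∃ s < t, ∀ t', s < t' → t' ∈ G := by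
    intro t ht
    have hxt : x ∈ {w | g w < t} := connectedComponentIn_nonempty_iff.1 ⟨y, ht⟩
    have hpath : IsPathConnected (connectedComponentIn {w | g w < t} x) :=
      (isOpen_lt hg continuous_const).connectedComponentIn.isConnected_iff_isPathConnected.1
        (isConnected_connectedComponentIn_iff.2 hxt)
    obtain ⟨γ, hγ⟩ := hpath.joinedIn x (mem_connectedComponentIn hxt) y ht
    obtain ⟨i, hi⟩ := γ.exists_forall_gt_mem_connectedComponentIn hg
    exact ⟨g (γ i), connectedComponentIn_subset {w | g w < t} x (hγ i), hi⟩
  obtain ⟨i, hi⟩ := (PathConnectedSpace.somePath x y).exists_forall_gt_mem_connectedComponentIn hg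
  have hne : G.Nonempty := ⟨g _ + 1, hi _ (lt_add_one _)⟩
  by_contra hc
  have hGc : ∀ t ∈ G, c < t := fun t ht => lt_of_not_ge fun h => hc (hmono h ht)
  have hbdd : BddBelow G := ⟨c, fun t ht => (hGc t ht).le⟩
  have hcT : c ≤ sInf G := le_csInf hne fun t ht => (hGc t ht).le
  have hT : sInf G ∉ G := fun hT => by
    obtain ⟨s, hs, hsG⟩ := hopen _ hT
    exact (csInf_le hbdd (hsG _ (left_lt_add_div_two.2 hs))).not_gt (add_div_two_lt_right.2 hs)
  refine hT (mem_connectedComponentIn_sublevel_of_forall_gt (T := sInf G) hg hcpt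
    (fun z hz => hreg z (hcT.trans hz.ge)) ((hx : g x < c).trans_le hcT)
    ((hy : g y < c).trans_le hcT) fun t ht => ?_)
  obtain ⟨s, hsG, hst⟩ := exists_lt_of_csInf_lt hne ht
  exact hmono hst.le hsG

end Sublevel

theorem HasStrictDerivAt.isSublevelRegularAt_norm {f : ℂ → ℂ} {f' z₀ : ℂ}
    (hf : HasStrictDerivAt f f' z₀) (hf' : f' ≠ 0) (hz₀ : f z₀ ≠ 0) :
    IsSublevelRegularAt (fun z => ‖f z‖) z₀ := by
  -- Near `z₀`, `f` is a homeomorphism onto a ball, carrying the sublevel sets of `‖f‖` to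
  -- intersections of that ball with discs about `0`.
  have hfe := hf.hasStrictFDerivAt_equiv hf'
  set e := hfe.toOpenPartialHomeomorph f
  have he : (e : ℂ → ℂ) = f := hfe.toOpenPartialHomeomorph_coe
  obtain ⟨r, hr, hball⟩ := isOpen_iff.1 e.open_target (f z₀)
    (he ▸ e.map_source hfe.mem_toOpenPartialHomeomorph_source)
  have hsymm : ∀ s ⊆ ball (f z₀) r, e.symm '' s = e.source ∩ f ⁻¹' s := fun s hs =>
    he ▸ e.symm_image_eq_source_inter_preimage (hs.trans hball)
  set U := e.source ∩ f ⁻¹' ball (f z₀) r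
  have hlt : U ∩ {z | ‖f z‖ < ‖f z₀‖} = e.symm '' (ball (f z₀) r ∩ ball 0 ‖f z₀‖) := by
    rw [hsymm _ inter_subset_left]; ext z; simp [U, and_assoc]
  have hle : U ∩ {z | ‖f z‖ ≤ ‖f z₀‖} = e.symm '' (ball (f z₀) r ∩ closedBall 0 ‖f z₀‖) := by
    rw [hsymm _ inter_subset_left]; ext z; simp [U, and_assoc]
  have hU : IsOpen U := by
    simpa only [U, he] using e.continuousOn.isOpen_inter_preimage e.open_source isOpen_ball
  refine ⟨U, hU, ⟨hfe.mem_toOpenPartialHomeomorph_source, mem_ball_self hr⟩, ?_, ?_⟩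
  · rw [hlt]
    exact ((convex_ball _ _).inter (convex_ball _ _)).isPreconnected.image _
      (e.continuousOn_symm.mono (inter_subset_left.trans hball))
  · rw [hle, hlt]
    rintro _ ⟨w, hw, rfl⟩
    refine (e.continuousAt_symm (hball hw.1)).continuousWithinAt.mem_closure_image
      (isOpen_ball.inter_closure ⟨hw.1, ?_⟩)
    rw [closure_ball 0 (norm_ne_zero_iff.2 hz₀)]
    exact hw.2

theorem Polynomial.isPreconnected_setOf_norm_eval_lt (p : Polynomial ℂ) (hp : 0 < p.degree)
    {c : ℝ} (hcrit : ∀ w, p.derivative.eval w = 0 → ‖p.eval w‖ < c) :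
    IsPreconnected {z | ‖p.eval z‖ < c} := by
  rcases le_or_gt c 0 with hc | hc
  · convert isPreconnected_empty
    exact eq_empty_iff_forall_notMem.2 fun z hz => (hc.trans (norm_nonneg _)).not_gt hz
  have hg : Continuous fun z => ‖p.eval z‖ := p.continuous.norm
  refine isPreconnected_sublevel_of_isSublevelRegularAt hg
    (isCompact_setOf_le_of_tendsto_cocompact hg
      (p.tendsto_norm_atTop hp tendsto_norm_cocompact_atTop)) fun z hz => ?_
  exact (p.hasStrictDerivAt z).isSublevelRegularAt_norm (fun h => (hcrit z h).not_ge hz)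
    fun h => by rw [h, norm_zero] at hz; exact hc.not_ge hz

noncomputable def blaschkeFactor (a z : ℂ) : ℂ := (z - a) / (1 - conj a * z)

theorem normSq_one_sub_conj_mul_sub_normSq_sub (a z : ℂ) :
    normSq (1 - conj a * z) - normSq (z - a) = (1 - normSq a) * (1 - normSq z) := by
  simp only [normSq_apply, sub_re, sub_im, mul_re, mul_im, one_re, one_im, conj_re, conj_im]
  ring

theorem one_sub_conj_mul_ne_zero {a z : ℂ} (ha : ‖a‖ < 1) (hz : ‖z‖ ≤ 1) :
    1 - conj a * z ≠ 0 := by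
  have : ‖conj a * z‖ < 1 := by
    rw [norm_mul, norm_conj]
    exact lt_of_le_of_lt (mul_le_of_le_one_right (norm_nonneg a) hz) ha
  rw [sub_ne_zero]
  rintro h
  rw [← h, norm_one] at this
  exact this.false

theorem norm_sub_lt_norm_one_sub_conj_mul {a z : ℂ} (ha : ‖a‖ < 1) (hz : ‖z‖ < 1) :
    ‖z - a‖ < ‖1 - conj a * z‖ := by
  have h := normSq_one_sub_conj_mul_sub_normSq_sub a z
  rw [normSq_eq_norm_sq, normSq_eq_norm_sq, normSq_eq_norm_sq, normSq_eq_norm_sq] at h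
  have hpos : 0 < (1 - ‖a‖ ^ 2) * (1 - ‖z‖ ^ 2) :=
    mul_pos (sub_pos.2 (pow_lt_one₀ (norm_nonneg a) ha two_ne_zero))
      (sub_pos.2 (pow_lt_one₀ (norm_nonneg z) hz two_ne_zero))
  exact lt_of_pow_lt_pow_left₀ 2 (norm_nonneg _) (by linarith)

theorem norm_one_sub_conj_mul_of_norm_eq_one (a : ℂ) {z : ℂ} (hz : ‖z‖ = 1) :
    ‖1 - conj a * z‖ = ‖z - a‖ := by
  have h := normSq_one_sub_conj_mul_sub_normSq_sub a z
  rw [normSq_eq_norm_sq z, hz, one_pow, sub_self, mul_zero, sub_eq_zero,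
    normSq_eq_norm_sq, normSq_eq_norm_sq] at h
  exact (pow_left_inj₀ (norm_nonneg _) (norm_nonneg _) two_ne_zero).1 h

theorem norm_blaschkeFactor_lt_one {a z : ℂ} (ha : ‖a‖ < 1) (hz : ‖z‖ < 1) :
    ‖blaschkeFactor a z‖ < 1 := by
  rw [blaschkeFactor, norm_div, div_lt_one (norm_pos_iff.2 (one_sub_conj_mul_ne_zero ha hz.le))]
  exact norm_sub_lt_norm_one_sub_conj_mul ha hz

theorem norm_blaschkeFactor_of_norm_eq_one {a z : ℂ} (ha : ‖a‖ < 1) (hz : ‖z‖ = 1) :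
    ‖blaschkeFactor a z‖ = 1 := by
  rw [blaschkeFactor, norm_div, norm_one_sub_conj_mul_of_norm_eq_one a hz, div_self]
  exact norm_ne_zero_iff.2 (sub_ne_zero.2 fun h => by rw [h] at hz; exact ha.ne hz)

theorem continuousAt_blaschkeFactor {a z : ℂ} (ha : ‖a‖ < 1) (hz : ‖z‖ ≤ 1) :
    ContinuousAt (blaschkeFactor a) z :=
  (continuousAt_id.sub continuousAt_const).div
    (continuousAt_const.sub (continuousAt_const.mul continuousAt_id))
    (one_sub_conj_mul_ne_zero ha hz)

section BlaschkeProduct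

variable {ι : Type*} [Fintype ι] {lam : ℂ} {a : ι → ℂ} {g φ : ℂ → ℂ}

noncomputable def blaschkeProduct (lam : ℂ) (a : ι → ℂ) (z : ℂ) : ℂ :=
  lam * ∏ j, blaschkeFactor (a j) z

theorem norm_blaschkeProduct_lt_one [Nonempty ι] (hlam : ‖lam‖ = 1) (ha : ∀ j, ‖a j‖ < 1)
    {z : ℂ} (hz : ‖z‖ < 1) : ‖blaschkeProduct lam a z‖ < 1 := by
  rw [blaschkeProduct, norm_mul, hlam, one_mul, norm_prod]
  classical
  obtain ⟨j⟩ := ‹Nonempty ι›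
  rw [← Finset.mul_prod_erase _ _ (Finset.mem_univ j)]
  exact mul_lt_one_of_nonneg_of_lt_one_left (norm_nonneg _) (norm_blaschkeFactor_lt_one (ha j) hz)
    (Finset.prod_le_one (fun _ _ => norm_nonneg _) fun i _ =>
      (norm_blaschkeFactor_lt_one (ha i) hz).le)

theorem norm_blaschkeProduct_of_norm_eq_one (hlam : ‖lam‖ = 1) (ha : ∀ j, ‖a j‖ < 1)
    {z : ℂ} (hz : ‖z‖ = 1) : ‖blaschkeProduct lam a z‖ = 1 := by
  rw [blaschkeProduct, norm_mul, hlam, one_mul, norm_prod]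
  exact Finset.prod_eq_one fun j _ => norm_blaschkeFactor_of_norm_eq_one (ha j) hz

theorem continuousAt_blaschkeProduct (ha : ∀ j, ‖a j‖ < 1) {z : ℂ} (hz : ‖z‖ ≤ 1) :
    ContinuousAt (blaschkeProduct lam a) z :=
  continuousAt_const.mul <| tendsto_finsetProd _ fun j _ => continuousAt_blaschkeFactor (ha j) hz

theorem blaschkeProduct_apply_self (j : ι) : blaschkeProduct lam a (a j) = 0 := by
  rw [blaschkeProduct, Finset.prod_eq_zero (Finset.mem_univ j) (by simp [blaschkeFactor]),
    mul_zero]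

theorem blaschkeProduct_ne_zero (hlam : lam ≠ 0) (ha : ∀ j, ‖a j‖ < 1) {z : ℂ} (hz : ‖z‖ ≤ 1)
    (hza : z ∉ range a) : blaschkeProduct lam a z ≠ 0 :=
  mul_ne_zero hlam <| Finset.prod_ne_zero_iff.2 fun j _ =>
    div_ne_zero (sub_ne_zero.2 fun h => hza ⟨j, h.symm⟩) (one_sub_conj_mul_ne_zero (ha j) hz)

theorem exists_blaschkeProduct_ne_zero (hlam : lam ≠ 0) (ha : ∀ j, ‖a j‖ < 1) :
    ∃ z ∈ ball (0 : ℂ) 1, blaschkeProduct lam a z ≠ 0 := by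
  obtain ⟨z, hz, hza⟩ :=
    ((infinite_of_mem_nhds (0 : ℂ) (ball_mem_nhds 0 one_pos)).sdiff (finite_range a)).nonempty
  exact ⟨z, hz, blaschkeProduct_ne_zero hlam ha (mem_ball_zero_iff.1 hz).le hza⟩

theorem isOpen_image_unitDisk_of_blaschkeProduct_eq [Nonempty ι] (hlam : lam ≠ 0)
    (ha : ∀ j, ‖a j‖ < 1) (hφ : DifferentiableOn ℂ φ unitDisk)
    (hcomp : ∀ z ∈ unitDisk, blaschkeProduct lam a z = g (φ z)) :
    IsOpen (φ '' unitDisk) := by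
  rw [unitDisk_eq_ball] at hφ hcomp ⊢
  refine ((hφ.analyticOnNhd isOpen_ball).is_constant_or_isOpen
    (convex_ball 0 1).isPreconnected).resolve_left ?_ _ subset_rfl isOpen_ball
  rintro ⟨w, hw⟩
  obtain ⟨j⟩ := ‹Nonempty ι›
  obtain ⟨z, hz, hBz⟩ := exists_blaschkeProduct_ne_zero hlam ha
  have haj : a j ∈ ball 0 1 := mem_ball_zero_iff.2 (ha j)
  exact hBz (by rw [hcomp z hz, hw z hz, ← hw _ haj, ← hcomp _ haj, blaschkeProduct_apply_self])

theorem closure_image_unitDisk_inter_subset_of_blaschkeProduct_eq (hlam : ‖lam‖ = 1)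
    (ha : ∀ j, ‖a j‖ < 1) (hg : Continuous g) (hφ : ContinuousOn φ unitDisk)
    (hcomp : ∀ z ∈ unitDisk, blaschkeProduct lam a z = g (φ z)) :
    closure (φ '' unitDisk) ∩ {z | ‖g z‖ < 1} ⊆ φ '' unitDisk := fun _ hζ =>
  mem_image_of_mem_closure_of_isCompact (isCompact_closedBall 0 1)
    (unitDisk_eq_ball ▸ ball_subset_closedBall)
    (fun _ hz =>
      (continuousAt_blaschkeProduct ha (mem_closedBall_zero_iff.1 hz)).continuousWithinAt)
    hφ hg (fun z hz => hcomp z hz) (W := unitDisk)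
    (fun z hz hBz => (hBz : ‖blaschkeProduct lam a z‖ < 1).ne <|
      norm_blaschkeProduct_of_norm_eq_one hlam ha <|
        le_antisymm (mem_closedBall_zero_iff.1 hz.1) (not_lt.1 hz.2)) hζ.1 hζ.2

end BlaschkeProduct

/-- Let `B` be a finite Blaschke product of degree `n` and `p` a polynomial
of degree `n` all of whose critical values lie in the open unit disk. If `φ` is holomorphic
on the disk with `B = p ∘ φ` there, then `φ(D) = D_p = {z : |p(z)| < 1}`. -/
theorem stmt10 (n : ℕ) (hn : 1 ≤ n) (lam : ℂ) (hlam : ‖lam‖ = 1)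
    (a : Fin n → ℂ) (ha : ∀ j, a j ∈ unitDisk)
    (B : ℂ → ℂ)
    (hB : ∀ z : ℂ, B z = lam * ∏ j, (z - a j) / (1 - (starRingEnd ℂ) (a j) * z))
    (p : Polynomial ℂ) (hdeg : p.natDegree = n)
    (hcrit : ∀ w : ℂ, (Polynomial.derivative p).eval w = 0 → ‖p.eval w‖ < 1)
    (φ : ℂ → ℂ) (hφ : DifferentiableOn ℂ φ unitDisk)
    (hcomp : ∀ z ∈ unitDisk, B z = p.eval (φ z)) :
    φ '' unitDisk = {z : ℂ | ‖p.eval z‖ < 1} := by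
  obtain rfl : B = blaschkeProduct lam a := funext hB
  have ha' : ∀ j, ‖a j‖ < 1 := ha
  have : Nonempty (Fin n) := ⟨⟨0, hn⟩⟩
  have hsub : φ '' unitDisk ⊆ {z | ‖p.eval z‖ < 1} := by
    rintro _ ⟨z, hz, rfl⟩
    show ‖p.eval (φ z)‖ < 1
    rw [← hcomp z hz]
    exact norm_blaschkeProduct_lt_one hlam ha' hz
  have hDp : IsPreconnected {z | ‖p.eval z‖ < 1} :=
    p.isPreconnected_setOf_norm_eval_lt (natDegree_pos_iff_degree_pos.1 (hdeg ▸ hn)) hcrit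
  have hopen : IsOpen (φ '' unitDisk) :=
    isOpen_image_unitDisk_of_blaschkeProduct_eq (g := fun w => p.eval w)
      (norm_ne_zero_iff.1 (hlam ▸ one_ne_zero)) ha' hφ hcomp
  have hclosed := closure_image_unitDisk_inter_subset_of_blaschkeProduct_eq
    (g := fun w => p.eval w) hlam ha' p.continuous hφ.continuousOn hcomp
  exact hsub.antisymm <| hDp.subset_of_closure_inter_subset hopen
    ⟨_, hsub ⟨_, ha ⟨0, hn⟩, rfl⟩, _, ha ⟨0, hn⟩, rfl⟩ hclosed
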